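/- For every m ≥ 8 there is a preference profile on which the Independent Markets mechanism has ℓ1-loss at least 2 − 8/m^{1/3}. Concretely, set z = ⌊m − m^{2/3}⌋ and a = (m − z)^2, and consider the profile with m voters over m projects where, for i = 1,…,z, voter i proposes the single-minded division with 1 on project i, and each of the remaining m − z voters proposes the division x with x_j = 1/(a+z) for j ≤ z and x_j = (m−z)/(a+z) for j > z; the Independent Markets mechanism outputs x on this profile (a feasible phantom parameter is t* = 1/(a+z)), and the resulting loss equals 2·(a/(a+z))·(z/m) ≥ 2 − 8/m^{1/3}. -/

import Mathlib

/-!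
Put `T = a + z ≥ m`. For `t = 1/T` the phantoms `min (k t) 1 = k/T` (`k ≤ m`) are linear, and the
median of every column is `x_j`. On a project `j < z` only the `z - 1` zeros and the phantom `0`
lie below `1/T`, while the `m - 1` reports other than voter `j`'s `1`, together with the phantoms
`0` and `1/T`, are `≤ 1/T`. On a project `j ≥ z` only the `z` zeros and the phantoms
`0, …, (m-z-1)/T` lie below `(m-z)/T`, and all `m` reports are `≤ (m-z)/T`. Since `a = (m-z)^2`,
these medians sum to `1`. Medians are monotone in `t`, so two parameters whose medians both sum
to `1` yield the same outcome.

With `e = m^{1/3}` the floor gives `e³ - e² - 1 ≤ z ≤ e³ - e²`, hence `a ≥ e⁴ ≥ e z`, so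
`a/(a+z) ≥ 1 - 1/e` and `z/m ≥ 1 - 2/e`, and `2 (1 - 1/e)(1 - 2/e) ≥ 2 - 8/e`.
-/

open Finset

/-- A division among `m` projects: coordinates in `[0,1]` summing to `1`. -/
def IsDivision {m : ℕ} (x : Fin m → ℝ) : Prop :=
  (∀ j, 0 ≤ x j ∧ x j ≤ 1) ∧ ∑ j, x j = 1

/-- The ℓ1 distance between two vectors over `Fin m`. -/
noncomputable def l1 {m : ℕ} (x y : Fin m → ℝ) : ℝ := ∑ j, |x j - y j|

/-- The proportional division (coordinatewise mean) of a profile. -/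
noncomputable def propDiv {n m : ℕ} (V : Fin n → Fin m → ℝ) : Fin m → ℝ :=
  fun j => (∑ i, V i j) / (n : ℝ)

/-- The `(k+1)`-th smallest element of a multiset of reals. -/
noncomputable def medianAt (s : Multiset ℝ) (k : ℕ) : ℝ :=
  (s.sort (· ≤ ·)).getD k 0

/-- Voter reports on project `j` together with the `n+1` phantom values `p 0, …, p n`. -/
noncomputable def projValues {n m : ℕ} (V : Fin n → Fin m → ℝ)
    (p : ℕ → ℝ) (j : Fin m) : Multiset ℝ :=
  (Multiset.map (fun i => V i j) Finset.univ.val) +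
    (Multiset.map p (Finset.range (n + 1)).val)

/-- The median (the `(n+1)`-th smallest of the `2n+1` values) of the `n` voter reports
on project `j` together with the `n+1` phantom values. -/
noncomputable def phantomMedian {n m : ℕ} (V : Fin n → Fin m → ℝ)
    (p : ℕ → ℝ) (j : Fin m) : ℝ :=
  medianAt (projValues V p j) n

/-- A phantom system for `n` voters: continuous, weakly increasing functions
`y k : [0,1] → [0,1]`, `k = 0, …, n`, with `y k 0 = 0`, `y k 1 = 1`,
pointwise ordered in `k`. -/
structure PhantomSystem (n : ℕ) where
  y : ℕ → ℝ → ℝ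
  contOn : ∀ k ≤ n, ContinuousOn (y k) (Set.Icc 0 1)
  monoOn : ∀ k ≤ n, MonotoneOn (y k) (Set.Icc 0 1)
  mem_Icc : ∀ k ≤ n, ∀ t ∈ Set.Icc (0:ℝ) 1, y k t ∈ Set.Icc (0:ℝ) 1
  map_zero : ∀ k ≤ n, y k 0 = 0
  map_one : ∀ k ≤ n, y k 1 = 1
  mono_idx : ∀ t ∈ Set.Icc (0:ℝ) 1, ∀ k k', k ≤ k' → k' ≤ n → y k t ≤ y k' t

/-- `f` is the moving phantom mechanism associated with the phantom system `Y`: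
on each profile of divisions, for some `t*` making the medians sum to `1`,
it outputs on each project the median of the voter reports and the phantom values. -/
def IsMovingPhantom {n m : ℕ} (f : (Fin n → Fin m → ℝ) → (Fin m → ℝ))
    (Y : PhantomSystem n) : Prop :=
  ∀ V : Fin n → Fin m → ℝ, (∀ i, IsDivision (V i)) →
    ∃ t ∈ Set.Icc (0:ℝ) 1,
      (∑ j, phantomMedian V (fun k => Y.y k t) j) = 1 ∧
      ∀ j, f V j = phantomMedian V (fun k => Y.y k t) j

/-- Truthfulness of a budget aggregation mechanism: no voter `i` with true peak `V i`
can get an outcome closer (in ℓ1 distance) to her peak by reporting some division `v`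
instead of `V i`. -/
def Truthful {n m : ℕ} (f : (Fin n → Fin m → ℝ) → (Fin m → ℝ)) : Prop :=
  ∀ V : Fin n → Fin m → ℝ, (∀ i, IsDivision (V i)) →
    ∀ i : Fin n, ∀ v : Fin m → ℝ, IsDivision v →
      l1 (f V) (V i) ≤ l1 (f (Function.update V i v)) (V i)

/-- The ℓ1-loss of mechanism `f` on profile `V`. -/
noncomputable def loss {n m : ℕ} (f : (Fin n → Fin m → ℝ) → (Fin m → ℝ))
    (V : Fin n → Fin m → ℝ) : ℝ :=
  l1 (f V) (propDiv V)

/-- The phantom system of the Piecewise Uniform mechanism for `n` voters. -/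
noncomputable def puPhantom (n : ℕ) (k : ℕ) (t : ℝ) : ℝ :=
  if t < 1 / 2 then
    (if (k : ℝ) / (n : ℝ) < 1 / 2 then 0 else 4 * t * (k : ℝ) / (n : ℝ) - 2 * t)
  else
    (if (k : ℝ) / (n : ℝ) < 1 / 2 then (k : ℝ) * (2 * t - 1) / (n : ℝ)
     else (k : ℝ) * (3 - 2 * t) / (n : ℝ) - 2 + 2 * t)

/-- `w` is an output of the Piecewise Uniform mechanism on profile `V`. -/
def IsPUOutcome {n m : ℕ} (V : Fin n → Fin m → ℝ) (w : Fin m → ℝ) : Prop :=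
  ∃ t ∈ Set.Icc (0:ℝ) 1,
    (∑ j, phantomMedian V (fun k => puPhantom n k t) j) = 1 ∧
    ∀ j, w j = phantomMedian V (fun k => puPhantom n k t) j

/-- `w` is an output of the Independent Markets mechanism (phantoms `min (k·t) 1`)
on profile `V`. -/
def IsIMOutcome {n m : ℕ} (V : Fin n → Fin m → ℝ) (w : Fin m → ℝ) : Prop :=
  ∃ t : ℝ, 0 ≤ t ∧
    (∑ j, phantomMedian V (fun k => min ((k : ℝ) * t) 1) j) = 1 ∧
    ∀ j, w j = phantomMedian V (fun k => min ((k : ℝ) * t) 1) j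

/-- A single-minded division: it assigns the whole budget to one project. -/
def SingleMindedDiv {m : ℕ} (v : Fin m → ℝ) : Prop := ∃ j, v j = 1

/-- A double-minded division relative to an outcome `w` (three projects): it agrees with
`w` on one project `j`, proposes `1 - w j` on another project, and `0` on the third. -/
def DoubleMindedDiv (w v : Fin 3 → ℝ) : Prop :=
  ∃ j j' : Fin 3, j ≠ j' ∧ v j = w j ∧ v j' = 1 - w j ∧
    ∀ k, k ≠ j → k ≠ j' → v k = 0

/-- A three-type profile for mechanism `f`: each voter is fully-satisfied,
double-minded, or single-minded. -/
def ThreeTypeProfile {n : ℕ} (f : (Fin n → Fin 3 → ℝ) → (Fin 3 → ℝ))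
    (V : Fin n → Fin 3 → ℝ) : Prop :=
  ∀ i, V i = f V ∨ DoubleMindedDiv (f V) (V i) ∨ SingleMindedDiv (V i)

/-- The single-minded division fully supporting project `j`. -/
noncomputable def singleDiv (j : Fin 3) : Fin 3 → ℝ :=
  fun j' => if j' = j then 1 else 0

/-- The double-minded division proposing `x k` on project `k`, `1 - x k` on
project `j` and `0` on the remaining project. -/
noncomputable def doubleDiv (x : Fin 3 → ℝ) (k j : Fin 3) : Fin 3 → ℝ :=
  fun j' => if j' = k then x k else if j' = j then 1 - x k else 0

/-- A utilitarian mechanism: it always returns a division minimizing the total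
ℓ1 distance (social cost) to the voters' proposals. -/
def Utilitarian {n m : ℕ} (f : (Fin n → Fin m → ℝ) → (Fin m → ℝ)) : Prop :=
  ∀ V : Fin n → Fin m → ℝ, (∀ i, IsDivision (V i)) →
    IsDivision (f V) ∧
    ∀ x : Fin m → ℝ, IsDivision x → (∑ i, l1 (V i) (f V)) ≤ ∑ i, l1 (V i) x


/-- `z = ⌊m - m^(2/3)⌋`. -/
noncomputable def zLB (m : ℕ) : ℕ := Nat.floor ((m : ℝ) - (m : ℝ) ^ ((2 : ℝ) / 3))

/-- `a = (m - z)²`. -/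
noncomputable def aLB (m : ℕ) : ℕ := (m - zLB m) ^ 2

/-- The target division: `1/(a+z)` on the first `z` projects and `(m-z)/(a+z)` on the
remaining `m - z` projects. -/
noncomputable def xLB (m : ℕ) : Fin m → ℝ :=
  fun j => if (j : ℕ) < zLB m then 1 / ((aLB m : ℝ) + (zLB m : ℝ))
    else ((m : ℝ) - (zLB m : ℝ)) / ((aLB m : ℝ) + (zLB m : ℝ))

/-- The lower-bound profile with `m` voters over `m` projects: voter `i < z` is
single-minded toward project `i`; the remaining `m - z` voters propose `xLB m`. -/
noncomputable def lbProfile (m : ℕ) : Fin m → Fin m → ℝ :=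
  fun i j => if (i : ℕ) < zLB m then (if j = i then 1 else 0) else xLB m j

section OrderStatistic

variable {α : Type*}

theorem Multiset.countP_le_countP_of_imp {s : Multiset α} {p q : α → Prop} [DecidablePred p]
    [DecidablePred q] (h : ∀ a, p a → q a) : s.countP p ≤ s.countP q := by
  simpa only [Multiset.countP_eq_card_filter] using
    Multiset.card_le_card (Multiset.monotone_filter_right s h)

variable [LinearOrder α]

theorem Multiset.countP_eq_countP_sort (s : Multiset α) (p : α → Prop) [DecidablePred p] :
    s.countP p = (s.sort (· ≤ ·)).countP (fun a => decide (p a)) := by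
  conv_lhs => rw [← Multiset.sort_eq s (· ≤ ·)]
  exact Multiset.coe_countP _ _

variable {l : List α} {k : ℕ}

theorem List.Pairwise.countP_lt_getElem_le (hl : l.Pairwise (· ≤ ·)) (hk : k < l.length) :
    l.countP (· < l[k]) ≤ k := by
  have hdrop : (l.drop k).countP (· < l[k]) = 0 := by
    refine List.countP_eq_zero.2 fun y hy => ?_
    obtain ⟨i, hi, rfl⟩ := List.mem_iff_getElem.1 hy
    simpa using hl.rel_get_of_le (a := ⟨k, hk⟩) (b := ⟨k + i, by simp at hi; omega⟩) (by simp)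
  calc l.countP (· < l[k]) = (l.take k).countP (· < l[k]) + (l.drop k).countP (· < l[k]) := by
        rw [← List.countP_append, List.take_append_drop]
    _ ≤ k := by rw [hdrop]; exact List.countP_le_length.trans (by simp)

theorem List.Pairwise.lt_countP_le_getElem (hl : l.Pairwise (· ≤ ·)) (hk : k < l.length) :
    k < l.countP (· ≤ l[k]) := by
  have htake : (l.take (k + 1)).countP (· ≤ l[k]) = k + 1 := by
    rw [List.countP_eq_length.2, List.length_take]
    · omega
    intro y hy
    obtain ⟨i, hi, rfl⟩ := List.mem_iff_getElem.1 hy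
    simp only [List.length_take] at hi
    simpa using hl.rel_get_of_le (a := ⟨i, by omega⟩) (b := ⟨k, hk⟩) (by simp; omega)
  calc k < k + 1 := k.lt_succ_self
    _ = _ := htake.symm
    _ ≤ _ := (List.take_sublist _ _).countP_le

end OrderStatistic

section Median

variable {s s' : Multiset ℝ} {k : ℕ}

theorem countP_lt_medianAt_le (hk : k < Multiset.card s) :
    s.countP (· < medianAt s k) ≤ k := by
  have hk' : k < (s.sort (· ≤ ·)).length := by rwa [Multiset.length_sort]
  rw [Multiset.countP_eq_countP_sort, medianAt, List.getD_eq_getElem _ _ hk']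
  exact (Multiset.pairwise_sort s _).countP_lt_getElem_le hk'

theorem lt_countP_le_medianAt (hk : k < Multiset.card s) :
    k < s.countP (· ≤ medianAt s k) := by
  have hk' : k < (s.sort (· ≤ ·)).length := by rwa [Multiset.length_sort]
  rw [Multiset.countP_eq_countP_sort, medianAt, List.getD_eq_getElem _ _ hk']
  exact (Multiset.pairwise_sort s _).lt_countP_le_getElem hk'

theorem medianAt_eq_of_countP {x : ℝ} (hk : k < Multiset.card s) (hlt : s.countP (· < x) ≤ k)
    (hle : k < s.countP (· ≤ x)) : medianAt s k = x := by
  refine le_antisymm (not_lt.1 fun hx => ?_) (not_lt.1 fun hx => ?_)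
  · have := Multiset.countP_le_countP_of_imp (s := s) fun y (hy : y ≤ x) => hy.trans_lt hx
    have := countP_lt_medianAt_le hk
    omega
  · have := Multiset.countP_le_countP_of_imp (s := s)
      fun y (hy : y ≤ medianAt s k) => hy.trans_lt hx
    have := lt_countP_le_medianAt hk
    omega

theorem medianAt_mono (hk : k < Multiset.card s) (hk' : k < Multiset.card s')
    (hss' : ∀ x, s'.countP (· ≤ x) ≤ s.countP (· ≤ x)) : medianAt s k ≤ medianAt s' k := by
  refine not_lt.1 fun hlt => ?_
  have := hss' (medianAt s' k)
  have := Multiset.countP_le_countP_of_imp (s := s)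
    fun y (hy : y ≤ medianAt s' k) => hy.trans_lt hlt
  have := lt_countP_le_medianAt hk'
  have := countP_lt_medianAt_le hk
  omega

end Median

section PhantomMedian

variable {n m : ℕ} (V : Fin n → Fin m → ℝ) (p : ℕ → ℝ) (j : Fin m)

theorem card_projValues : Multiset.card (projValues V p j) = 2 * n + 1 := by
  rw [projValues, Multiset.card_add, Multiset.card_map, Multiset.card_map, card_val, card_val,
    card_univ, Fintype.card_fin, card_range]
  ring

theorem countP_projValues (q : ℝ → Prop) [DecidablePred q] :
    (projValues V p j).countP q = #{i | q (V i j)} + #{k ∈ range (n + 1) | q (p k)} := by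
  simp only [projValues, Multiset.countP_add, Multiset.countP_map, ← Finset.filter_val]
  rfl

theorem phantomMedian_eq_of_card {x : ℝ}
    (hlt : #{i | V i j < x} + #{k ∈ range (n + 1) | p k < x} ≤ n)
    (hle : n < #{i | V i j ≤ x} + #{k ∈ range (n + 1) | p k ≤ x}) :
    phantomMedian V p j = x :=
  medianAt_eq_of_countP (by rw [card_projValues]; omega) (by rwa [countP_projValues])
    (by rwa [countP_projValues])

theorem phantomMedian_congr {p' : ℕ → ℝ} (h : ∀ k ≤ n, p k = p' k) :
    phantomMedian V p j = phantomMedian V p' j := by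
  unfold phantomMedian projValues
  congr 2
  exact Multiset.map_congr rfl fun k hk => h k (Nat.lt_succ_iff.1 (Finset.mem_range.1 hk))

theorem phantomMedian_mono {p p' : ℕ → ℝ} (h : ∀ k, p k ≤ p' k) :
    phantomMedian V p j ≤ phantomMedian V p' j := by
  refine medianAt_mono (by rw [card_projValues]; omega) (by rw [card_projValues]; omega)
    fun x => ?_
  rw [countP_projValues, countP_projValues]
  gcongr with k
  exact h k

end PhantomMedian

theorem IsIMOutcome.eq {n m : ℕ} {V : Fin n → Fin m → ℝ} {w w' : Fin m → ℝ}
    (hw : IsIMOutcome V w) (hw' : IsIMOutcome V w') : w = w' := by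
  obtain ⟨t, -, hsum, hw⟩ := hw
  obtain ⟨t', -, hsum', hw'⟩ := hw'
  wlog htt' : t ≤ t' generalizing w w' t t'
  · exact (this t' hsum' hw' t hsum hw (le_of_not_ge htt')).symm
  have hmono : ∀ j ∈ univ, phantomMedian V (fun k => min ((k : ℝ) * t) 1) j ≤
      phantomMedian V (fun k => min ((k : ℝ) * t') 1) j := fun j _ =>
    phantomMedian_mono V j fun k => min_le_min_right 1 (by gcongr)
  funext j
  rw [hw j, hw' j]
  exact (sum_eq_sum_iff_of_le hmono).1 (hsum.trans hsum'.symm) j (mem_univ j)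

theorem card_filter_natCast_mul_lt {t : ℝ} (ht : 0 < t) (N c : ℕ) :
    #{k ∈ range N | ((k : ℕ) : ℝ) * t < c * t} = min c N := by
  rw [← card_range (min c N)]
  congr 1
  ext k
  simp only [mul_lt_mul_iff_of_pos_right ht, Nat.cast_lt, mem_filter, mem_range, lt_inf_iff]
  omega

theorem card_filter_natCast_mul_le {t : ℝ} (ht : 0 < t) (N c : ℕ) :
    #{k ∈ range N | ((k : ℕ) : ℝ) * t ≤ c * t} = min (c + 1) N := by
  rw [← card_range (min (c + 1) N)]
  congr 1
  ext k
  simp only [mul_le_mul_iff_of_pos_right ht, Nat.cast_le, mem_filter, mem_range, lt_inf_iff]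
  omega

theorem Fin.card_filter_not_val_lt {m z : ℕ} : #{i : Fin m | ¬(i : ℕ) < z} = m - z := by
  rw [Finset.filter_not, card_sdiff_of_subset (filter_subset _ _), Fin.card_filter_val_lt,
    card_univ, Fintype.card_fin]
  omega

theorem Fin.sum_ite_val_lt {m z : ℕ} (h : z ≤ m) (α β : ℝ) :
    ∑ j : Fin m, (if (j : ℕ) < z then α else β) = z * α + ((m : ℝ) - z) * β := by
  rw [Finset.sum_ite, Finset.sum_const, Finset.sum_const, Fin.card_filter_val_lt,
    Fin.card_filter_not_val_lt, min_eq_right h, nsmul_eq_mul, nsmul_eq_mul, Nat.cast_sub h]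

theorem two_sub_eight_div_le {e z : ℝ} (he : 2 ≤ e) (hz_le : z ≤ e ^ 3 - e ^ 2)
    (hz_ge : e ^ 3 - e ^ 2 - 1 ≤ z) :
    2 - 8 / e ≤ 2 * ((e ^ 3 - z) ^ 2 / ((e ^ 3 - z) ^ 2 + z)) * (z / e ^ 3) := by
  have he0 : 0 < e := by linarith
  have hz0 : 0 < z := by nlinarith
  have ha : e * z ≤ (e ^ 3 - z) ^ 2 :=
    calc e * z ≤ e * e ^ 3 := by gcongr; nlinarith
      _ = (e ^ 2) ^ 2 := by ring
      _ ≤ (e ^ 3 - z) ^ 2 := by gcongr; linarith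
  have h1 : 1 - 1 / e ≤ (e ^ 3 - z) ^ 2 / ((e ^ 3 - z) ^ 2 + z) := by
    rw [le_div_iff₀ (by positivity), one_sub_div he0.ne', div_mul_eq_mul_div, div_le_iff₀ he0]
    nlinarith
  have h2 : 1 - 2 / e ≤ z / e ^ 3 := by
    rw [le_div_iff₀ (by positivity), one_sub_div he0.ne', div_mul_eq_mul_div, div_le_iff₀ he0]
    nlinarith
  have h2e : 0 ≤ 1 - 2 / e := by rw [sub_nonneg, div_le_one he0]; exact he
  calc 2 - 8 / e ≤ 2 * ((1 - 1 / e) * (1 - 2 / e)) := by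
        have : 0 ≤ 1 / e := by positivity
        rw [div_eq_mul_one_div 8, div_eq_mul_one_div 2]
        nlinarith
    _ ≤ 2 * ((e ^ 3 - z) ^ 2 / ((e ^ 3 - z) ^ 2 + z) * (z / e ^ 3)) := by gcongr
    _ = _ := by ring

section LowerBoundProfile

variable {m : ℕ}

theorem zLB_lt (hm : 1 ≤ m) : zLB m < m := by
  rw [zLB, Nat.floor_lt' (by omega)]
  have : 0 < (m : ℝ) ^ ((2 : ℝ) / 3) := Real.rpow_pos_of_pos (by exact_mod_cast hm) _
  linarith

theorem le_aLB_add_zLB (m : ℕ) : m ≤ aLB m + zLB m := by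
  have := Nat.le_self_pow two_ne_zero (m - zLB m)
  rw [aLB]
  omega

theorem aLB_cast (h : zLB m ≤ m) : (aLB m : ℝ) = ((m : ℝ) - zLB m) ^ 2 := by
  rw [aLB, Nat.cast_pow, Nat.cast_sub h]

theorem aLB_add_zLB_pos (hm : 1 ≤ m) : (0 : ℝ) < aLB m + zLB m := by
  have : (m : ℝ) ≤ aLB m + zLB m := by exact_mod_cast le_aLB_add_zLB m
  have : (1 : ℝ) ≤ m := by exact_mod_cast hm
  linarith

theorem card_lbProfile_lt_xLB_le (j : Fin m) : #{i | lbProfile m i j < xLB m j} ≤ zLB m :=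
  calc _ ≤ #{i : Fin m | (i : ℕ) < zLB m} := card_le_card fun i => by
          simp only [mem_filter, mem_univ, true_and]
          contrapose!
          intro hi
          simp [lbProfile, not_lt.2 hi]
    _ ≤ zLB m := Fin.card_filter_val_lt.trans_le (min_le_right _ _)

theorem phantomMedian_lbProfile_of_lt (hm : 1 ≤ m) {j : Fin m} (hj : (j : ℕ) < zLB m) :
    phantomMedian (lbProfile m) (fun k => (k : ℝ) * (1 / ((aLB m : ℝ) + zLB m))) j =
      xLB m j := by
  set t := 1 / ((aLB m : ℝ) + zLB m) with ht_def
  have ht : 0 < t := one_div_pos.2 (aLB_add_zLB_pos hm)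
  have hx : xLB m j = ((1 : ℕ) : ℝ) * t := by simp [xLB, hj, ht_def]
  apply phantomMedian_eq_of_card
  · have hV := card_lbProfile_lt_xLB_le j
    have hz := zLB_lt hm
    rw [hx] at hV ⊢
    rw [card_filter_natCast_mul_lt ht]
    omega
  · have hV : m - 1 ≤ #{i | lbProfile m i j ≤ xLB m j} := by
      calc m - 1 = #(univ.erase j) := by simp
        _ ≤ _ := card_le_card fun i => by
          simp only [mem_erase, mem_filter, mem_univ, and_true, true_and]
          intro hij
          by_cases hi : (i : ℕ) < zLB m
          · simp [lbProfile, hi, Ne.symm hij, hx, ht.le]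
          · simp [lbProfile, hi]
    rw [hx] at hV ⊢
    rw [card_filter_natCast_mul_le ht]
    omega

theorem phantomMedian_lbProfile_of_le (hm : 1 ≤ m) {j : Fin m} (hj : zLB m ≤ (j : ℕ)) :
    phantomMedian (lbProfile m) (fun k => (k : ℝ) * (1 / ((aLB m : ℝ) + zLB m))) j =
      xLB m j := by
  set t := 1 / ((aLB m : ℝ) + zLB m) with ht_def
  have ht : 0 < t := one_div_pos.2 (aLB_add_zLB_pos hm)
  have hz := zLB_lt hm
  have hx : xLB m j = ((m - zLB m : ℕ) : ℝ) * t := by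
    rw [xLB, if_neg (not_lt.2 hj), Nat.cast_sub hz.le, mul_one_div]
  apply phantomMedian_eq_of_card
  · have hV := card_lbProfile_lt_xLB_le j
    rw [hx] at hV ⊢
    rw [card_filter_natCast_mul_lt ht]
    omega
  · have hV : #{i | lbProfile m i j ≤ xLB m j} = m := by
      rw [filter_true_of_mem, card_univ, Fintype.card_fin]
      intro i _
      by_cases hi : (i : ℕ) < zLB m
      · have hji : j ≠ i := fun h => by omega
        simp only [lbProfile, hi, hji, if_true, if_false, hx]
        positivity
      · simp [lbProfile, hi]
    rw [hx] at hV ⊢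
    rw [card_filter_natCast_mul_le ht]
    omega

theorem phantomMedian_lbProfile (hm : 1 ≤ m) (j : Fin m) :
    phantomMedian (lbProfile m)
      (fun k => min ((k : ℝ) * (1 / ((aLB m : ℝ) + (zLB m : ℝ)))) 1) j = xLB m j := by
  have hlin : ∀ k ≤ m, min ((k : ℝ) * (1 / ((aLB m : ℝ) + zLB m))) 1 =
      k * (1 / ((aLB m : ℝ) + zLB m)) := by
    intro k hk
    refine min_eq_left ?_
    rw [mul_one_div, div_le_one (aLB_add_zLB_pos hm)]
    exact_mod_cast hk.trans (le_aLB_add_zLB m)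
  rw [phantomMedian_congr _ _ _ hlin]
  rcases lt_or_ge (j : ℕ) (zLB m) with hj | hj
  · exact phantomMedian_lbProfile_of_lt hm hj
  · exact phantomMedian_lbProfile_of_le hm hj

theorem sum_xLB (hm : 1 ≤ m) : ∑ j, xLB m j = 1 := by
  have hz := (zLB_lt hm).le
  have hT := aLB_add_zLB_pos hm
  unfold xLB
  rw [Fin.sum_ite_val_lt hz, aLB_cast hz]
  rw [aLB_cast hz] at hT
  field_simp
  ring

theorem sum_lbProfile_apply (hm : 1 ≤ m) (j : Fin m) :
    ∑ i, lbProfile m i j = (if (j : ℕ) < zLB m then 1 else 0) + ((m : ℝ) - zLB m) * xLB m j := by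
  simp only [lbProfile]
  rw [sum_ite, sum_ite_eq, sum_const, Fin.card_filter_not_val_lt, nsmul_eq_mul,
    Nat.cast_sub (zLB_lt hm).le]
  simp

theorem abs_xLB_sub_propDiv (hm : 1 ≤ m) (j : Fin m) :
    |xLB m j - propDiv (lbProfile m) j| = if (j : ℕ) < zLB m
      then (aLB m : ℝ) / ((aLB m + zLB m) * m)
      else ((m : ℝ) - zLB m) * zLB m / ((aLB m + zLB m) * m) := by
  have hz := (zLB_lt hm).le
  have hT := aLB_add_zLB_pos hm
  have hmz : (0 : ℝ) ≤ m - zLB m := sub_nonneg.2 (by exact_mod_cast hz)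
  rw [propDiv, sum_lbProfile_apply hm]
  by_cases hj : (j : ℕ) < zLB m
  · have hdiff : xLB m j - (1 + ((m : ℝ) - zLB m) * xLB m j) / m =
        -(aLB m / ((aLB m + zLB m) * m)) := by
      simp only [xLB, hj, if_true]
      rw [aLB_cast hz] at hT ⊢
      field_simp
      ring
    simp only [hj, if_true, hdiff, abs_neg]
    exact abs_of_nonneg (by positivity)
  · have hdiff : xLB m j - (0 + ((m : ℝ) - zLB m) * xLB m j) / m =
        ((m : ℝ) - zLB m) * zLB m / ((aLB m + zLB m) * m) := by
      simp only [xLB, hj, if_false]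
      rw [aLB_cast hz] at hT ⊢
      field_simp
      ring
    simp only [hj, if_false, hdiff]
    exact abs_of_nonneg (by positivity)

theorem l1_xLB_propDiv (hm : 1 ≤ m) :
    l1 (xLB m) (propDiv (lbProfile m)) =
      2 * ((aLB m : ℝ) / ((aLB m : ℝ) + (zLB m : ℝ))) * ((zLB m : ℝ) / (m : ℝ)) := by
  have hz := (zLB_lt hm).le
  have hT := aLB_add_zLB_pos hm
  rw [l1, Finset.sum_congr rfl fun j _ => abs_xLB_sub_propDiv hm j, Fin.sum_ite_val_lt hz]
  rw [aLB_cast hz] at hT ⊢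
  field_simp
  ring

theorem two_sub_eight_div_rpow_le (hm : 8 ≤ m) :
    2 - 8 / (m : ℝ) ^ ((1 : ℝ) / 3) ≤
      2 * ((aLB m : ℝ) / ((aLB m : ℝ) + (zLB m : ℝ))) * ((zLB m : ℝ) / (m : ℝ)) := by
  have hm0 : (0 : ℝ) ≤ m := m.cast_nonneg
  set e := (m : ℝ) ^ ((1 : ℝ) / 3) with he_def
  have he3 : e ^ 3 = m := by
    rw [he_def, ← Real.rpow_natCast, ← Real.rpow_mul hm0]
    norm_num
  have he2 : (m : ℝ) ^ ((2 : ℝ) / 3) = e ^ 2 := by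
    rw [he_def, ← Real.rpow_natCast, ← Real.rpow_mul hm0]
    norm_num
  have he : 2 ≤ e := by
    have : (8 : ℝ) ≤ e ^ 3 := by rw [he3]; exact_mod_cast hm
    nlinarith [sq_nonneg (e - 2), sq_nonneg (e + 2)]
  have hz_le : (zLB m : ℝ) ≤ e ^ 3 - e ^ 2 := by
    rw [he3, ← he2, zLB]
    exact Nat.floor_le (by nlinarith)
  have hz_ge : e ^ 3 - e ^ 2 - 1 ≤ zLB m := by
    rw [he3, ← he2, zLB]
    exact (sub_lt_iff_lt_add.2 (Nat.lt_floor_add_one _)).le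
  rw [aLB_cast (zLB_lt (by omega)).le, ← he3]
  exact two_sub_eight_div_le he hz_le hz_ge

end LowerBoundProfile

/-- For every `m ≥ 8`, on the profile `lbProfile m` the Independent
Markets mechanism outputs `xLB m` (a feasible phantom parameter is `t* = 1/(a+z)`),
and the resulting ℓ1-loss equals `2·(a/(a+z))·(z/m) ≥ 2 - 8/m^(1/3)`. -/
theorem independent_markets_many_projects (m : ℕ) (hm : 8 ≤ m) :
    ((∑ j, phantomMedian (lbProfile m)
        (fun k => min ((k : ℝ) * (1 / ((aLB m : ℝ) + (zLB m : ℝ)))) 1) j) = 1 ∧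
      ∀ j, phantomMedian (lbProfile m)
          (fun k => min ((k : ℝ) * (1 / ((aLB m : ℝ) + (zLB m : ℝ)))) 1) j
        = xLB m j) ∧
    (∀ w : Fin m → ℝ, IsIMOutcome (lbProfile m) w → w = xLB m) ∧
    l1 (xLB m) (propDiv (lbProfile m)) =
      2 * ((aLB m : ℝ) / ((aLB m : ℝ) + (zLB m : ℝ))) * ((zLB m : ℝ) / (m : ℝ)) ∧
    2 - 8 / (m : ℝ) ^ ((1 : ℝ) / 3) ≤
      2 * ((aLB m : ℝ) / ((aLB m : ℝ) + (zLB m : ℝ))) * ((zLB m : ℝ) / (m : ℝ)) := by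
  have hm1 : 1 ≤ m := by omega
  have hmed := phantomMedian_lbProfile hm1
  have hsum : (∑ j, phantomMedian (lbProfile m)
      (fun k => min ((k : ℝ) * (1 / ((aLB m : ℝ) + (zLB m : ℝ)))) 1) j) = 1 := by
    rw [Finset.sum_congr rfl fun j _ => hmed j]
    exact sum_xLB hm1
  have hIM : IsIMOutcome (lbProfile m) (xLB m) :=
    ⟨_, (one_div_pos.2 (aLB_add_zLB_pos hm1)).le, hsum, fun j => (hmed j).symm⟩
  exact ⟨⟨hsum, hmed⟩, fun w hw => hw.eq hIM, l1_xLB_propDiv hm1, two_sub_eight_div_rpow_le hm⟩
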